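/- Fix n > 1 and let (x₁, …, x_n) be a nonzero element of ker(Φ_n). Then the subspace of V(n) spanned by x₁, …, x_n has dimension at least 3. -/

import Mathlib

open Submodule

/-- Index type for the distinguished basis of `V(n)`: pairs `(j,i)` with `i < j`. -/
abbrev VIdx (n : ℕ) := {q : Fin n × Fin n // q.2 < q.1}

/-- Index type for the distinguished basis of `W(n)`: triples `(j,i,k)` with `i < j`, `i ≤ k`. -/
abbrev WIdx (n : ℕ) := {t : Fin n × Fin n × Fin n // t.2.1 < t.1 ∧ t.2.1 ≤ t.2.2}

/-- The vector space `V(n)` over `F`. -/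
abbrev V (F : Type*) [Field F] (n : ℕ) := VIdx n → F

/-- The vector space `W(n)` over `F`. -/
abbrev W (F : Type*) [Field F] (n : ℕ) := WIdx n → F

variable (F : Type*) [Field F] (n : ℕ)

/-- The vector `v[j,i]`, with the conventions `v[i,j] = -v[j,i]` and `v[i,i] = 0`. -/
noncomputable def v (j i : Fin n) : V F n :=
  if h : i < j then Pi.single (⟨(j, i), h⟩ : VIdx n) 1
  else if h' : j < i then -Pi.single (⟨(i, j), h'⟩ : VIdx n) 1
  else 0

/-- The vector `w[j,i,k]` (the basis vector when `i < j` and `i ≤ k`, zero otherwise). -/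
noncomputable def w (j i k : Fin n) : W F n :=
  if h : i < j ∧ i ≤ k then Pi.single (⟨(j, i, k), h⟩ : WIdx n) 1 else 0

/-- The linear map `φ_k : V(n) → W(n)` determined on basis vectors by
`φ_k(v[j,i]) = w[j,i,k]` if `i ≤ k`, and `φ_k(v[j,i]) = w[j,k,i] - w[i,k,j]` if `k < i`. -/
noncomputable def phi (k : Fin n) : V F n →ₗ[F] W F n :=
  (Pi.basisFun F (VIdx n)).constr F fun q =>
    if q.1.2 ≤ k then w F n q.1.1 q.1.2 k
    else w F n q.1.1 k q.1.2 - w F n q.1.2 k q.1.1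

/-- The linear map `Φ_n : V(n)ⁿ → W(n)`, `Φ_n(x₁,…,x_n) = φ₁(x₁) + ⋯ + φ_n(x_n)`. -/
noncomputable def Phi : (Fin n → V F n) →ₗ[F] W F n :=
  ∑ k : Fin n, (phi F n k).comp (LinearMap.proj k)

/-- For `X ≤ V(n)`, the subspace `X* ≤ W(n)`: the span of `φ₁(X) ∪ ⋯ ∪ φ_n(X)`. -/
noncomputable def starV (X : Submodule F (V F n)) : Submodule F (W F n) :=
  ⨆ k : Fin n, X.map (phi F n k)

/-- For `Y ≤ W(n)`, the subspace `Y* ≤ V(n)`: the intersection `⋂ₖ φ_k⁻¹(Y)`. -/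
noncomputable def starW (Y : Submodule F (W F n)) : Submodule F (V F n) :=
  ⨅ k : Fin n, Y.comap (phi F n k)


/-!
Write `T k j i` for the coefficient of `v[j,i]` in `x_k`, extended antisymmetrically in `(j,i)`.
The coordinate of `Φ_n(x)` at `w[j,i,k]` is `T k j i + T i j k` when `i < k` and `T i j i` when
`i = k`, so `x ∈ ker Φ_n` makes `T` an alternating function of its three indices. If
`T a b c ≠ 0`, the coefficient of `v[b,c]` vanishes on `x_b` and `x_c` but not on `x_a`, and
cyclically, so `x_a, x_b, x_c` are linearly independent.
-/

structure IsAlternating3 {ι R : Type*} [Neg R] [Zero R] (T : ι → ι → ι → R) : Prop where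
  swap₂₃ : ∀ a b c, T a c b = -T a b c
  swap₁₃ : ∀ a b c, T c b a = -T a b c
  eq_zero₁₃ : ∀ a b, T a b a = 0

namespace IsAlternating3

variable {ι R : Type*}

lemma of_lt [LinearOrder ι] [AddGroup R] {T : ι → ι → ι → R}
    (swap₂₃ : ∀ a b c, T a c b = -T a b c) (eq_zero₂₃ : ∀ a b, T a b b = 0)
    (swap₁₃_of_lt : ∀ a b c, a < b → a < c → T c b a = -T a b c)
    (eq_zero₁₃_of_lt : ∀ a b, a < b → T a b a = 0) :
    IsAlternating3 T := by
  have eq_zero₁₃ (a b : ι) : T a b a = 0 := by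
    rcases lt_trichotomy a b with h | rfl | h
    · exact eq_zero₁₃_of_lt a b h
    · exact eq_zero₂₃ a a
    · rw [swap₂₃, swap₁₃_of_lt b a a h h, eq_zero₂₃, neg_zero, neg_zero]
  refine ⟨swap₂₃, fun a b c => ?_, eq_zero₁₃⟩
  obtain rfl | hac := eq_or_ne a c
  · rw [eq_zero₁₃, neg_zero]
  obtain rfl | hab := eq_or_ne a b
  · rw [eq_zero₂₃, swap₂₃, eq_zero₁₃, neg_zero, neg_zero]
  obtain rfl | hbc := eq_or_ne b c
  · rw [eq_zero₂₃, swap₂₃, eq_zero₁₃, neg_zero]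
  by_cases ha : a < b ∧ a < c
  · exact swap₁₃_of_lt a b c ha.1 ha.2
  by_cases hc : c < b ∧ c < a
  · rw [swap₁₃_of_lt c b a hc.1 hc.2, neg_neg]
  have hb : b < a ∧ b < c := by
    rcases not_and_or.mp ha with ha | ha <;> rcases not_and_or.mp hc with hc | hc <;>
      constructor <;> order
  calc T c b a = -T c a b := swap₂₃ c a b
    _ = T b a c := by rw [swap₁₃_of_lt b a c hb.1 hb.2, neg_neg]
    _ = -T b c a := swap₂₃ b c a
    _ = T a c b := by rw [swap₁₃_of_lt b c a hb.2 hb.1]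
    _ = -T a b c := swap₂₃ a b c

lemma linearIndependent {K M : Type*} [Field K] [AddCommGroup M] [Module K M]
    {f : ι → ι → M →ₗ[K] K} {y : ι → M} (hT : IsAlternating3 fun a b c => f b c (y a))
    {a b c : ι} (habc : f b c (y a) ≠ 0) : LinearIndependent K (y ∘ ![a, b, c]) := by
  have zero₁₂ (p q : ι) : f p q (y p) = 0 := by
    rw [hT.swap₂₃ p q p, hT.eq_zero₁₃, neg_zero]
  have zero₁₃ (p q : ι) : f q p (y p) = 0 := hT.eq_zero₁₃ p q
  have cyc₁ : f c a (y b) = f b c (y a) := by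
    rw [hT.swap₁₃ a c b, hT.swap₂₃ a b c, neg_neg]
  have cyc₂ : f a b (y c) = f b c (y a) := by
    rw [hT.swap₁₃ b a c, hT.swap₂₃ b c a, neg_neg, cyc₁]
  rw [Fintype.linearIndependent_iff]
  intro g hg
  simp only [Fin.sum_univ_three, Function.comp_apply, Matrix.cons_val_zero, Matrix.cons_val_one,
    Matrix.cons_val_two, Matrix.head_cons, Matrix.tail_cons] at hg
  have e₀ := congrArg (f b c) hg
  have e₁ := congrArg (f c a) hg
  have e₂ := congrArg (f a b) hg
  simp only [map_add, map_smul, smul_eq_mul, map_zero, zero₁₂, zero₁₃, cyc₁, cyc₂,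
    mul_zero, add_zero, zero_add] at e₀ e₁ e₂
  intro i
  fin_cases i
  · exact (mul_eq_zero.mp e₀).resolve_right habc
  · exact (mul_eq_zero.mp e₁).resolve_right habc
  · exact (mul_eq_zero.mp e₂).resolve_right habc

end IsAlternating3

variable {F n}

/-- The coefficient of `v[j,i]`, extended by `v[i,j] = -v[j,i]` and `v[i,i] = 0`. -/
def coord (j i : Fin n) : V F n →ₗ[F] F :=
  if h : i < j then LinearMap.proj (⟨(j, i), h⟩ : VIdx n)
  else if h' : j < i then -LinearMap.proj (⟨(i, j), h'⟩ : VIdx n)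
  else 0

lemma coord_of_lt {j i : Fin n} (h : i < j) (y : V F n) : coord j i y = y ⟨(j, i), h⟩ := by
  simp [coord, h]

lemma coord_swap (j i : Fin n) (y : V F n) : coord j i y = -coord i j y := by
  rcases lt_trichotomy i j with h | rfl | h
  · simp [coord, h, h.not_gt]
  · simp [coord]
  · simp [coord, h, h.not_gt]

lemma coord_self (i : Fin n) (y : V F n) : coord i i y = 0 := by
  simp [coord]

lemma coord_single (J I : Fin n) (q : VIdx n) :
    coord J I (Pi.single q (1 : F)) =
      if q.1 = (J, I) then 1 else if q.1 = (I, J) then -1 else 0 := by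
  obtain ⟨⟨j, i⟩, hij : i < j⟩ := q
  unfold coord
  split_ifs <;> simp_all [Pi.single_apply, Subtype.ext_iff] <;> omega

lemma w_apply (j i k : Fin n) (t : WIdx n) :
    w F n j i k t = if t.1 = (j, i, k) then 1 else 0 := by
  obtain ⟨t, ht⟩ := t
  unfold w
  by_cases h : i < j ∧ i ≤ k
  · simp [h, Pi.single_apply, Subtype.ext_iff]
  · have : t ≠ (j, i, k) := by rintro rfl; exact h ht
    simp [h, this]

lemma phi_apply_mk (k : Fin n) (y : V F n) {J I K : Fin n} (h : I < J ∧ I ≤ K) :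
    phi F n k y ⟨(J, I, K), h⟩ =
      (if k = K then coord J I y else 0) + if k = I ∧ I < K then coord J K y else 0 := by
  suffices (LinearMap.proj (⟨(J, I, K), h⟩ : WIdx n)).comp (phi F n k) =
      (if k = K then coord J I else 0) + if k = I ∧ I < K then coord J K else 0 by
    have := LinearMap.congr_fun this y
    split_ifs at this ⊢ <;> simpa using this
  refine (Pi.basisFun F (VIdx n)).ext ?_
  rintro ⟨⟨j, i⟩, hij : i < j⟩
  rw [LinearMap.comp_apply, phi, Module.Basis.constr_basis, Pi.basisFun_apply]
  simp only [LinearMap.proj_apply, LinearMap.add_apply]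
  split_ifs <;>
    simp only [w_apply, coord_single, Prod.mk.injEq, LinearMap.zero_apply, Pi.sub_apply] <;>
    split_ifs <;> first | (exfalso; omega) | norm_num

lemma Phi_apply_mk (x : Fin n → V F n) {J I K : Fin n} (h : I < J ∧ I ≤ K) :
    Phi F n x ⟨(J, I, K), h⟩ = coord J I (x K) + if I < K then coord J K (x I) else 0 := by
  simp only [Phi, LinearMap.sum_apply, Finset.sum_apply, LinearMap.comp_apply,
    LinearMap.proj_apply, phi_apply_mk, Finset.sum_add_distrib, ite_and]
  simp

lemma isAlternating3_coord_of_Phi_eq_zero {x : Fin n → V F n} (hx : Phi F n x = 0) :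
    IsAlternating3 fun k j i => coord j i (x k) := by
  refine .of_lt (fun k j i => coord_swap i j (x k)) (fun k j => coord_self j (x k))
    (fun i j k hij hik => ?_) (fun i j hij => ?_)
  · have := congrFun hx ⟨(j, i, k), hij, hik.le⟩
    rw [Phi_apply_mk, if_pos hik] at this
    exact eq_neg_of_add_eq_zero_left this
  · have := congrFun hx ⟨(j, i, i), hij, le_rfl⟩
    rwa [Phi_apply_mk, if_neg (lt_irrefl i), add_zero] at this

theorem statement7_general (p : ℕ) [Fact p.Prime] (n : ℕ)
    (x : Fin n → V (ZMod p) n) (hx : Phi (ZMod p) n x = 0) (hx0 : x ≠ 0) :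
    3 ≤ Module.finrank (ZMod p) ↥(Submodule.span (ZMod p) (Set.range x)) := by
  obtain ⟨k, ⟨⟨j, i⟩, hij⟩, hne⟩ : ∃ k q, x k q ≠ 0 := by
    simpa [funext_iff] using hx0
  have hli := (isAlternating3_coord_of_Phi_eq_zero hx).linearIndependent
    (a := k) (b := j) (c := i) (by rwa [coord_of_lt hij])
  calc 3 = Module.finrank (ZMod p) (span (ZMod p) (Set.range (x ∘ ![k, j, i]))) := by
        rw [finrank_span_eq_card hli, Fintype.card_fin]
    _ ≤ _ := Submodule.finrank_mono (span_mono (Set.range_comp_subset_range _ _))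

/-- If `(x₁,…,x_n)` is a nonzero element of `ker(Φ_n)`, then the span of `x₁,…,x_n`
has dimension at least `3`. -/
theorem statement7 (p : ℕ) [Fact p.Prime] (hp2 : p ≠ 2) (n : ℕ) (hn : 1 < n)
    (x : Fin n → V (ZMod p) n) (hx : Phi (ZMod p) n x = 0) (hx0 : x ≠ 0) :
    3 ≤ Module.finrank (ZMod p) ↥(Submodule.span (ZMod p) (Set.range x)) :=
  statement7_general p n x hx hx0
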